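/- arXiv:2303.09023 — 5 statements merged into one kernel-verified Lean document; each statement's English description precedes it below -/
import Mathlib

section
/- Let X be a non-degenerate random variable with zero mean and finite second moment. Then the function ε ↦ L(X, ε) := inf{ var E[X | X+Y] : Y independent of X, E[Y]=0, E[Y²] ≤ ε² } is right continuous on [0, ∞). -/
/-!
By the law of total variance, `var E[X | X+Y] = var X - mmse`, where
`mmse = E (X - E[X | X+Y])²`, and `mmse ≤ E Y²` because `X + Y` is itself an estimator of `X`
from `X + Y`. Hence `var X - ε² ≤ L(X, ε) ≤ var X`, which gives right continuity at `0`.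
For `0 < ε ≤ x`, switching noise admissible at level `x` off with probability `1 - ε²/x²`
yields noise admissible at level `ε`, and the mmse of a mixture dominates the weighted mmse of
its components, so `L(X, ε) ≤ (ε²/x²) L(X, x) + (1 - ε²/x²) var X`. Since `L(X, ·)` is
nonincreasing, this squeezes `L(X, x)` to `L(X, ε)` as `x ↓ ε`.
-/

open MeasureTheory ProbabilityTheory Filter

/-- The variance of the conditional expectation of the first coordinate given the sum of
the coordinates, for a joint law `π` on `ℝ × ℝ`. -/
noncomputable def cvar2 (π : Measure (ℝ × ℝ)) : ℝ :=
  variance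
    (π[(fun p : ℝ × ℝ => p.1) |
      MeasurableSpace.comap (fun p : ℝ × ℝ => p.1 + p.2) inferInstance]) π

/-- `L(X, ε)`: the infimum, over laws `ν` of mean-zero noise `Y` independent of `X`
(realized on the product space, which models an arbitrary enlargement) with `E[Y²] ≤ ε²`,
of `var E[X | X+Y]`, where `μ` is the law of `X`. -/
noncomputable def Lfun (μ : Measure ℝ) (ε : ℝ) : ℝ :=
  sInf { v : ℝ | ∃ ν : Measure ℝ, IsProbabilityMeasure ν ∧ Integrable id ν ∧
    Integrable (fun y => y ^ 2) ν ∧ (∫ y, y ∂ν) = 0 ∧ (∫ y, y ^ 2 ∂ν) ≤ ε ^ 2 ∧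
    v = cvar2 (μ.prod ν) }

open scoped ENNReal

section ConditionalExpectationL2

variable {Ω : Type*} {m m₀ : MeasurableSpace Ω} {μ : Measure Ω} {f h : Ω → ℝ}

lemma integral_mul_sub_condExp_eq_zero [IsFiniteMeasure μ] (hm : m ≤ m₀) (hf : MemLp f 2 μ)
    (hh : MemLp h 2 μ) (hhm : StronglyMeasurable[m] h) :
    ∫ ω, h ω * (f ω - μ[f|m] ω) ∂μ = 0 := by
  have hhf : Integrable (fun ω => h ω * f ω) μ := hh.integrable_mul hf
  have hhg : Integrable (fun ω => h ω * μ[f|m] ω) μ := hh.integrable_mul (hf.condExp one_le_two)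
  have hpull : μ[h * f|m] =ᵐ[μ] h * μ[f|m] :=
    condExp_mul_of_stronglyMeasurable_left hhm hhf (hf.integrable one_le_two)
  have hint : ∫ ω, h ω * μ[f|m] ω ∂μ = ∫ ω, h ω * f ω ∂μ :=
    (integral_congr_ae hpull).symm.trans (integral_condExp hm)
  simp_rw [mul_sub]
  rw [integral_sub hhf hhg, hint, sub_self]

lemma integral_sq_sub_condExp_le [IsFiniteMeasure μ] (hm : m ≤ m₀) (hf : MemLp f 2 μ)
    (hh : MemLp h 2 μ) (hhm : StronglyMeasurable[m] h) :
    ∫ ω, (f ω - μ[f|m] ω) ^ 2 ∂μ ≤ ∫ ω, (f ω - h ω) ^ 2 ∂μ := by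
  set g := μ[f|m]
  have hg : MemLp g 2 μ := hf.condExp one_le_two
  have horth : ∫ ω, (g ω - h ω) * (f ω - g ω) ∂μ = 0 :=
    integral_mul_sub_condExp_eq_zero hm hf (hg.sub hh) (stronglyMeasurable_condExp.sub hhm)
  have hfg : Integrable (fun ω => (f ω - g ω) ^ 2) μ := (hf.sub hg).integrable_sq
  have hgh : Integrable (fun ω => (g ω - h ω) ^ 2) μ := (hg.sub hh).integrable_sq
  have hcross : Integrable (fun ω => 2 * ((g ω - h ω) * (f ω - g ω))) μ :=
    ((hg.sub hh).integrable_mul (hf.sub hg)).const_mul 2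
  calc ∫ ω, (f ω - g ω) ^ 2 ∂μ
      ≤ ∫ ω, (f ω - g ω) ^ 2 ∂μ + ∫ ω, (g ω - h ω) ^ 2 ∂μ
          + ∫ ω, 2 * ((g ω - h ω) * (f ω - g ω)) ∂μ := by
        rw [integral_const_mul, horth, mul_zero, add_zero]
        exact le_add_of_nonneg_right (integral_nonneg fun ω => sq_nonneg _)
    _ = ∫ ω, (f ω - h ω) ^ 2 ∂μ := by
        have hsum : Integrable (fun ω => (f ω - g ω) ^ 2 + (g ω - h ω) ^ 2) μ := hfg.add hgh
        rw [← integral_add hfg hgh, ← integral_add hsum hcross]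
        exact integral_congr_ae (ae_of_all _ fun ω => by ring)

lemma variance_condExp_eq [IsProbabilityMeasure μ] (hm : m ≤ m₀) (hf : MemLp f 2 μ) :
    Var[μ[f|m]; μ] = Var[f; μ] - ∫ ω, (f ω - μ[f|m] ω) ^ 2 ∂μ := by
  rw [← integral_condVar_add_variance_condExp hm hf, condVar, integral_condExp hm]
  simp only [Pi.pow_apply, Pi.sub_apply]
  ring

lemma toReal_mul_integral_sq_sub_condExp_le [IsFiniteMeasure μ] {μ' : Measure Ω}
    [IsFiniteMeasure μ'] (hm : m ≤ m₀) {c : ℝ≥0∞} (hc : c ≠ ∞) (hle : c • μ' ≤ μ)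
    (hf : MemLp f 2 μ) :
    c.toReal * ∫ ω, (f ω - μ'[f|m] ω) ^ 2 ∂μ' ≤ ∫ ω, (f ω - μ[f|m] ω) ^ 2 ∂μ := by
  rcases eq_or_ne c 0 with rfl | hc0
  · simpa using integral_nonneg fun ω => sq_nonneg (f ω - μ[f|m] ω)
  have hle' : μ' ≤ c⁻¹ • μ := by
    calc μ' = c⁻¹ • c • μ' := by rw [smul_smul, ENNReal.inv_mul_cancel hc0 hc, one_smul]
      _ ≤ c⁻¹ • μ := by gcongr
  have hg : MemLp (μ[f|m]) 2 μ := hf.condExp one_le_two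
  have hres : MemLp (fun ω => f ω - μ[f|m] ω) 2 μ := hf.sub hg
  calc c.toReal * ∫ ω, (f ω - μ'[f|m] ω) ^ 2 ∂μ'
      ≤ c.toReal * ∫ ω, (f ω - μ[f|m] ω) ^ 2 ∂μ' := by
        have hc' : c⁻¹ ≠ ∞ := ENNReal.inv_ne_top.2 hc0
        exact mul_le_mul_of_nonneg_left (integral_sq_sub_condExp_le hm
          (hf.of_measure_le_smul hc' hle') (hg.of_measure_le_smul hc' hle')
          stronglyMeasurable_condExp) ENNReal.toReal_nonneg
    _ = ∫ ω, (f ω - μ[f|m] ω) ^ 2 ∂(c • μ') := by rw [integral_smul_measure, smul_eq_mul]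
    _ ≤ ∫ ω, (f ω - μ[f|m] ω) ^ 2 ∂μ :=
        integral_mono_measure hle (ae_of_all _ fun ω => sq_nonneg _) hres.integrable_sq

end ConditionalExpectationL2

section ProductSpace

abbrev sumMeasurableSpace : MeasurableSpace (ℝ × ℝ) :=
  MeasurableSpace.comap (fun p : ℝ × ℝ => p.1 + p.2) inferInstance

lemma sumMeasurableSpace_le : sumMeasurableSpace ≤ (inferInstance : MeasurableSpace (ℝ × ℝ)) :=
  measurable_iff_comap_le.mp (by fun_prop)

lemma stronglyMeasurable_sumMeasurableSpace_add :
    StronglyMeasurable[sumMeasurableSpace] (fun p : ℝ × ℝ => p.1 + p.2) :=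
  (comap_measurable _).stronglyMeasurable

noncomputable def mmse (π : Measure (ℝ × ℝ)) : ℝ :=
  ∫ p, (p.1 - π[(fun q : ℝ × ℝ => q.1)|sumMeasurableSpace] p) ^ 2 ∂π

lemma mmse_nonneg (π : Measure (ℝ × ℝ)) : 0 ≤ mmse π :=
  integral_nonneg fun _ => sq_nonneg _

variable {μ ν : Measure ℝ} [IsProbabilityMeasure μ] [IsProbabilityMeasure ν]

lemma cvar2_prod_eq (hX : MemLp id 2 μ) :
    cvar2 (μ.prod ν) = Var[id; μ] - mmse (μ.prod ν) := by
  rw [← (measurePreserving_fst (μ := μ) (ν := ν)).variance_fun_comp aemeasurable_id]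
  exact variance_condExp_eq sumMeasurableSpace_le (hX.comp_fst ν)

lemma cvar2_prod_le_variance (hX : MemLp id 2 μ) : cvar2 (μ.prod ν) ≤ Var[id; μ] := by
  linarith [cvar2_prod_eq (ν := ν) hX, mmse_nonneg (μ.prod ν)]

lemma mmse_prod_le (hX : MemLp id 2 μ) (hY : Integrable (fun y => y ^ 2) ν) :
    mmse (μ.prod ν) ≤ ∫ y, y ^ 2 ∂ν := by
  have hY' : MemLp id 2 ν := (memLp_two_iff_integrable_sq aestronglyMeasurable_id).mpr hY
  have h := integral_sq_sub_condExp_le sumMeasurableSpace_le (hX.comp_fst ν)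
    ((hX.comp_fst ν).add (hY'.comp_snd μ)) stronglyMeasurable_sumMeasurableSpace_add
  simp only [id, Pi.add_apply, sub_add_cancel_left, neg_sq] at h
  rwa [integral_fun_snd (fun y : ℝ => y ^ 2), probReal_univ, one_smul] at h

lemma variance_sub_le_cvar2_prod (hX : MemLp id 2 μ) (hY : Integrable (fun y => y ^ 2) ν) :
    Var[id; μ] - ∫ y, y ^ 2 ∂ν ≤ cvar2 (μ.prod ν) := by
  linarith [cvar2_prod_eq (ν := ν) hX, mmse_prod_le hX hY]

end ProductSpace

section NoiseMixture

noncomputable def noiseMixture (p : ℝ) (ν : Measure ℝ) : Measure ℝ :=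
  ENNReal.ofReal p • ν + ENNReal.ofReal (1 - p) • Measure.dirac 0

variable {p : ℝ} {ν : Measure ℝ}

lemma isProbabilityMeasure_noiseMixture [IsProbabilityMeasure ν] (hp₀ : 0 ≤ p) (hp₁ : p ≤ 1) :
    IsProbabilityMeasure (noiseMixture p ν) := by
  constructor
  simp only [noiseMixture, Measure.coe_add, Pi.add_apply, Measure.smul_apply, measure_univ,
    smul_eq_mul, mul_one]
  rw [← ENNReal.ofReal_add hp₀ (sub_nonneg.mpr hp₁), add_sub_cancel, ENNReal.ofReal_one]

lemma integrable_noiseMixture {f : ℝ → ℝ} (hf : Integrable f ν) (hf0 : f 0 = 0) :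
    Integrable f (noiseMixture p ν) :=
  (hf.smul_measure ENNReal.ofReal_ne_top).add_measure
    ((integrable_dirac (by simp [hf0])).smul_measure ENNReal.ofReal_ne_top)

lemma integral_noiseMixture {f : ℝ → ℝ} (hp₀ : 0 ≤ p) (hf : Integrable f ν) (hf0 : f 0 = 0) :
    ∫ y, f y ∂(noiseMixture p ν) = p * ∫ y, f y ∂ν := by
  rw [noiseMixture, integral_add_measure (hf.smul_measure ENNReal.ofReal_ne_top)
    ((integrable_dirac (by simp [hf0])).smul_measure ENNReal.ofReal_ne_top),
    integral_smul_measure, integral_smul_measure, integral_dirac, hf0, ENNReal.toReal_ofReal hp₀]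
  simp

variable {μ : Measure ℝ} [IsProbabilityMeasure μ] [IsProbabilityMeasure ν]

lemma mul_mmse_prod_le_mmse_prod_noiseMixture (hp₀ : 0 ≤ p) (hp₁ : p ≤ 1)
    (hX : MemLp id 2 μ) :
    p * mmse (μ.prod ν) ≤ mmse (μ.prod (noiseMixture p ν)) := by
  have := isProbabilityMeasure_noiseMixture (ν := ν) hp₀ hp₁
  have hle : ENNReal.ofReal p • μ.prod ν ≤ μ.prod (noiseMixture p ν) := by
    rw [noiseMixture, Measure.prod_add, Measure.prod_smul_right]
    exact Measure.le_add_right le_rfl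
  have h := toReal_mul_integral_sq_sub_condExp_le sumMeasurableSpace_le ENNReal.ofReal_ne_top
    hle (hX.comp_fst _)
  rwa [ENNReal.toReal_ofReal hp₀] at h

lemma cvar2_prod_noiseMixture_le (hp₀ : 0 ≤ p) (hp₁ : p ≤ 1) (hX : MemLp id 2 μ) :
    cvar2 (μ.prod (noiseMixture p ν)) ≤ p * cvar2 (μ.prod ν) + (1 - p) * Var[id; μ] := by
  have := isProbabilityMeasure_noiseMixture (ν := ν) hp₀ hp₁
  rw [cvar2_prod_eq hX, cvar2_prod_eq hX]
  linarith [mul_mmse_prod_le_mmse_prod_noiseMixture hp₀ hp₁ hX (ν := ν)]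

end NoiseMixture

section Lfun

def IsAdmissibleNoise (ε : ℝ) (ν : Measure ℝ) : Prop :=
  IsProbabilityMeasure ν ∧ Integrable id ν ∧ Integrable (fun y => y ^ 2) ν ∧
    (∫ y, y ∂ν) = 0 ∧ (∫ y, y ^ 2 ∂ν) ≤ ε ^ 2

lemma isAdmissibleNoise_dirac_zero (ε : ℝ) : IsAdmissibleNoise ε (Measure.dirac 0) :=
  ⟨inferInstance, integrable_dirac (by simp), integrable_dirac (by simp), by simp,
    by simpa using sq_nonneg ε⟩

lemma IsAdmissibleNoise.mono {ε δ : ℝ} {ν : Measure ℝ} (hν : IsAdmissibleNoise ε ν)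
    (hε : 0 ≤ ε) (hεδ : ε ≤ δ) : IsAdmissibleNoise δ ν :=
  ⟨hν.1, hν.2.1, hν.2.2.1, hν.2.2.2.1, hν.2.2.2.2.trans (pow_le_pow_left₀ hε hεδ 2)⟩

lemma IsAdmissibleNoise.noiseMixture {ε x : ℝ} {ν : Measure ℝ} (hν : IsAdmissibleNoise x ν)
    (hε : 0 < ε) (hεx : ε ≤ x) : IsAdmissibleNoise ε (noiseMixture (ε ^ 2 / x ^ 2) ν) := by
  obtain ⟨hprob, hid, hsq, hmean, hmom⟩ := hν
  have hx : 0 < x ^ 2 := pow_pos (hε.trans_le hεx) 2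
  have hq₀ : 0 ≤ ε ^ 2 / x ^ 2 := by positivity
  have hq₁ : ε ^ 2 / x ^ 2 ≤ 1 := div_le_one_of_le₀ (pow_le_pow_left₀ hε.le hεx 2) hx.le
  refine ⟨isProbabilityMeasure_noiseMixture hq₀ hq₁, integrable_noiseMixture hid rfl,
    integrable_noiseMixture hsq (by simp), ?_, ?_⟩
  · rw [integral_noiseMixture (f := fun y => y) hq₀ hid rfl, hmean, mul_zero]
  · rw [integral_noiseMixture hq₀ hsq (by simp)]
    calc ε ^ 2 / x ^ 2 * ∫ y, y ^ 2 ∂ν ≤ ε ^ 2 / x ^ 2 * x ^ 2 := by gcongr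
      _ = ε ^ 2 := div_mul_cancel₀ _ hx.ne'

variable {μ : Measure ℝ} {ε : ℝ}

lemma Lfun_eq_sInf_image :
    Lfun μ ε = sInf ((fun ν => cvar2 (μ.prod ν)) '' {ν | IsAdmissibleNoise ε ν}) := by
  refine congrArg sInf (Set.ext fun v => ?_)
  simp only [Set.mem_image, Set.mem_ofPred_eq, IsAdmissibleNoise, and_assoc]
  constructor <;> rintro ⟨ν, h₁, h₂, h₃, h₄, h₅, h₆⟩ <;> exact ⟨ν, h₁, h₂, h₃, h₄, h₅, h₆.symm⟩

lemma Lfun_le_cvar2 {ν : Measure ℝ} (hν : IsAdmissibleNoise ε ν) :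
    Lfun μ ε ≤ cvar2 (μ.prod ν) := by
  rw [Lfun_eq_sInf_image]
  exact csInf_le ⟨0, Set.forall_mem_image.mpr fun _ _ => variance_nonneg _ _⟩ ⟨ν, hν, rfl⟩

lemma le_Lfun {b : ℝ} (h : ∀ ν, IsAdmissibleNoise ε ν → b ≤ cvar2 (μ.prod ν)) :
    b ≤ Lfun μ ε := by
  rw [Lfun_eq_sInf_image]
  exact le_csInf ⟨_, _, isAdmissibleNoise_dirac_zero ε, rfl⟩ (Set.forall_mem_image.mpr h)

lemma Lfun_nonneg : 0 ≤ Lfun μ ε :=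
  le_Lfun fun _ _ => variance_nonneg _ _

lemma Lfun_antitoneOn : AntitoneOn (Lfun μ) (Set.Ici 0) :=
  fun _ hε _ _ hεδ => le_Lfun fun _ hν => Lfun_le_cvar2 (hν.mono hε hεδ)

variable [IsProbabilityMeasure μ]

lemma Lfun_le_variance (hX : MemLp id 2 μ) : Lfun μ ε ≤ Var[id; μ] :=
  (Lfun_le_cvar2 (isAdmissibleNoise_dirac_zero ε)).trans (cvar2_prod_le_variance hX)

lemma variance_sub_sq_le_Lfun (hX : MemLp id 2 μ) : Var[id; μ] - ε ^ 2 ≤ Lfun μ ε :=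
  le_Lfun fun _ ⟨_, _, hsq, _, hmom⟩ =>
    (sub_le_sub_left hmom _).trans (variance_sub_le_cvar2_prod hX hsq)

lemma Lfun_le_mul_Lfun_add (hX : MemLp id 2 μ) {x : ℝ} (hε : 0 < ε) (hεx : ε ≤ x) :
    Lfun μ ε ≤ ε ^ 2 / x ^ 2 * Lfun μ x + (1 - ε ^ 2 / x ^ 2) * Var[id; μ] := by
  set q := ε ^ 2 / x ^ 2
  have hq : 0 < q := div_pos (pow_pos hε 2) (pow_pos (hε.trans_le hεx) 2)
  have hq₁ : q ≤ 1 := div_le_one_of_le₀ (pow_le_pow_left₀ hε.le hεx 2) (sq_nonneg x)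
  suffices (Lfun μ ε - (1 - q) * Var[id; μ]) / q ≤ Lfun μ x by
    rw [div_le_iff₀' hq] at this; linarith
  refine le_Lfun fun ν hν => (div_le_iff₀' hq).mpr ?_
  have : IsProbabilityMeasure ν := hν.1
  have hmix := cvar2_prod_noiseMixture_le (μ := μ) (ν := ν) hq.le hq₁ hX
  linarith [Lfun_le_cvar2 (μ := μ) (hν.noiseMixture hε hεx)]

end Lfun

lemma continuousWithinAt_Ici_of_squeeze {f g : ℝ → ℝ} {a : ℝ}
    (hg : ContinuousWithinAt g (Set.Ici a) a) (hga : g a = f a)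
    (hgf : ∀ x ∈ Set.Ici a, g x ≤ f x) (hf : ∀ x ∈ Set.Ici a, f x ≤ f a) :
    ContinuousWithinAt f (Set.Ici a) a :=
  tendsto_of_tendsto_of_tendsto_of_le_of_le' (hga ▸ hg) tendsto_const_nhds
    (eventually_nhdsWithin_of_forall hgf) (eventually_nhdsWithin_of_forall hf)

section RightContinuity

variable {μ : Measure ℝ} [IsProbabilityMeasure μ]

lemma Lfun_continuousWithinAt_zero (hX : MemLp id 2 μ) :
    ContinuousWithinAt (Lfun μ) (Set.Ici 0) 0 := by
  refine continuousWithinAt_Ici_of_squeeze (g := fun x => Lfun μ 0 - x ^ 2)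
    (by fun_prop) (by simp) (fun x _ => ?_)
    (fun x hx => Lfun_antitoneOn (Set.mem_Ici.mpr le_rfl) hx hx)
  linarith [Lfun_le_variance hX (μ := μ) (ε := 0), variance_sub_sq_le_Lfun hX (ε := x)]

lemma Lfun_continuousWithinAt_of_pos (hX : MemLp id 2 μ) {ε : ℝ} (hε : 0 < ε) :
    ContinuousWithinAt (Lfun μ) (Set.Ici ε) ε := by
  refine continuousWithinAt_Ici_of_squeeze
    (g := fun x => Lfun μ ε - (1 - ε ^ 2 / x ^ 2) * Var[id; μ])
    (ContinuousAt.continuousWithinAt (by fun_prop (disch := positivity)))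
    (by simp [hε.ne']) (fun x hx => ?_)
    (fun x hx => Lfun_antitoneOn (Set.mem_Ici.mpr hε.le) (hε.le.trans hx) hx)
  have hq : ε ^ 2 / x ^ 2 * Lfun μ x ≤ Lfun μ x :=
    mul_le_of_le_one_left Lfun_nonneg
      (div_le_one_of_le₀ (pow_le_pow_left₀ hε.le hx 2) (sq_nonneg x))
  linarith [Lfun_le_mul_Lfun_add hX hε hx]

end RightContinuity

theorem stmt9_general (μ : Measure ℝ) [IsProbabilityMeasure μ]
    (hX2 : MemLp id 2 μ) :
    ∀ ε : ℝ, 0 ≤ ε → ContinuousWithinAt (Lfun μ) (Set.Ici ε) ε := by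
  intro ε hε
  rcases hε.eq_or_lt with rfl | hε
  · exact Lfun_continuousWithinAt_zero hX2
  · exact Lfun_continuousWithinAt_of_pos hX2 hε

/-- For non-degenerate mean-zero square-integrable `X` (law `mu`), the function
`eps -> L(X, eps)` is right continuous on `[0, +oo)`. -/
theorem stmt9 (μ : Measure ℝ) [IsProbabilityMeasure μ]
    (hX2 : MemLp id 2 μ) (hmean : ∫ x, x ∂μ = 0) (hnd : 0 < variance id μ) :
    ∀ ε : ℝ, 0 ≤ ε → ContinuousWithinAt (Lfun μ) (Set.Ici ε) ε :=
  stmt9_general μ hX2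
end

section
/- If X is independent of Y and Z is a non-degenerate Gaussian random variable independent of σ(X,Y), and E[X | X+Y+Z] = E[X | X+Y] almost surely with E[X]=0, E[X²] < ∞, then E[X | X+Y+Z] = 0 almost surely and hence E[X²] = 0, i.e. X = 0 a.s. -/
/-!
Write `S = X + Y`. By Doob–Dynkin, `E[X | S + Z] = f (S + Z)` and `E[X | S] = g S`, so the
hypothesis says `f (s + z) = g s` for almost every `(s, z)` under the law of `(S, Z)`, a product
law by independence. The Gaussian law of `Z` dominates the translation-invariant Lebesgue measure,
so for almost every `s` the function `f` equals `g s` Lebesgue-a.e.; hence `g` is a.e. constant,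
and the constant is `E[X] = 0`. Then `E[X (X + Y)] = E[E[X | S] (X + Y)] = 0`, while
`E[XY] = E[X] E[Y] = 0`, so `E[X²] = 0`.
-/

open MeasureTheory ProbabilityTheory

theorem exists_ae_eq_const_of_ae_ae_eq {α β γ : Type*} [MeasurableSpace α] [MeasurableSpace γ]
    {μ : Measure α} {ρ : Measure γ} [NeZero μ] [NeZero ρ] {f : γ → β} {g : α → β}
    (h : ∀ᵐ s ∂μ, ∀ᵐ t ∂ρ, f t = g s) : ∃ c, ∀ᵐ s ∂μ, g s = c := by
  obtain ⟨s₀, hs₀⟩ := h.exists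
  refine ⟨g s₀, ?_⟩
  filter_upwards [h] with s hs
  obtain ⟨t, hts, hts₀⟩ := (hs.and hs₀).exists
  rw [← hts, hts₀]

theorem ae_ae_eq_of_ae_prod_add_eq {G β : Type*} [MeasurableSpace G] [AddGroup G] [MeasurableAdd G]
    {μ ν ρ : Measure G} [SFinite ν] [ρ.IsAddLeftInvariant] (hρν : ρ ≪ ν) {f g : G → β}
    (h : ∀ᵐ p ∂μ.prod ν, f (p.1 + p.2) = g p.1) : ∀ᵐ s ∂μ, ∀ᵐ t ∂ρ, f t = g s := by
  filter_upwards [Measure.ae_ae_of_ae_prod h] with s hs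
  rw [ae_iff, ← measure_preimage_add ρ s]
  exact ae_iff.mp (hρν.ae_le hs)

theorem exists_condExp_ae_eq_const_of_condExp_add_ae_eq {Ω G : Type*} [MeasurableSpace Ω]
    {P : Measure Ω} [IsProbabilityMeasure P] [MeasurableSpace G] [AddGroup G] [MeasurableAdd₂ G]
    {ρ : Measure G} [NeZero ρ] [ρ.IsAddLeftInvariant] {S Z : Ω → G} (hS : Measurable S)
    (hZ : Measurable Z) (hSZ : IndepFun S Z P) (hρZ : ρ ≪ P.map Z) {X : Ω → ℝ}
    (h : P[X | MeasurableSpace.comap (fun ω => S ω + Z ω) inferInstance]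
      =ᵐ[P] P[X | MeasurableSpace.comap S inferInstance]) :
    ∃ c, P[X | MeasurableSpace.comap S inferInstance] =ᵐ[P] fun _ => c := by
  obtain ⟨f, hf, hf_eq⟩ := (stronglyMeasurable_condExp (μ := P) (f := X)
    (m := MeasurableSpace.comap (fun ω => S ω + Z ω) inferInstance)).exists_eq_measurable_comp
  obtain ⟨g, hg, hg_eq⟩ := (stronglyMeasurable_condExp (μ := P) (f := X)
    (m := MeasurableSpace.comap S inferInstance)).exists_eq_measurable_comp
  rw [hf_eq, hg_eq] at h
  have h_prod : ∀ᵐ p ∂(P.map S).prod (P.map Z), f (p.1 + p.2) = g p.1 := by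
    rw [← (indepFun_iff_map_prod_eq_prod_map_map hS.aemeasurable hZ.aemeasurable).mp hSZ]
    exact (ae_map_iff (hS.prodMk hZ).aemeasurable (measurableSet_eq_fun
      (hf.measurable.comp measurable_add) (hg.measurable.comp measurable_fst))).mpr h
  have : IsProbabilityMeasure (P.map S) := Measure.isProbabilityMeasure_map hS.aemeasurable
  obtain ⟨c, hc⟩ := exists_ae_eq_const_of_ae_ae_eq (ae_ae_eq_of_ae_prod_add_eq hρZ h_prod)
  exact ⟨c, hg_eq ▸ ae_of_ae_map hS.aemeasurable hc⟩

theorem eq_integral_of_condExp_ae_eq_const {Ω : Type*} {m mΩ : MeasurableSpace Ω} {P : Measure Ω}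
    [IsProbabilityMeasure P] (hm : m ≤ mΩ) {X : Ω → ℝ} {c : ℝ} (h : P[X | m] =ᵐ[P] fun _ => c) :
    c = ∫ ω, X ω ∂P := by
  rw [← integral_condExp hm, integral_congr_ae h, integral_const, probReal_univ, one_smul]

theorem integral_mul_eq_zero_of_condExp_ae_eq_zero {Ω : Type*} {m mΩ : MeasurableSpace Ω}
    {P : Measure Ω} [IsFiniteMeasure P] (hm : m ≤ mΩ) {W X : Ω → ℝ} (hW : StronglyMeasurable[m] W)
    (hWX : Integrable (W * X) P) (hX : Integrable X P) (h : P[X | m] =ᵐ[P] 0) :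
    ∫ ω, W ω * X ω ∂P = 0 := by
  calc ∫ ω, W ω * X ω ∂P = ∫ ω, P[W * X | m] ω ∂P := (integral_condExp hm).symm
    _ = ∫ ω, (W * P[X | m]) ω ∂P :=
      integral_congr_ae (condExp_mul_of_stronglyMeasurable_left hW hWX hX)
    _ = ∫ _, (0 : ℝ) ∂P := integral_congr_ae (h.mono fun ω hω => by simp [hω])
    _ = 0 := integral_zero _ _

theorem integral_sq_eq_zero_of_condExp_add_ae_eq_zero {Ω : Type*} [MeasurableSpace Ω]
    {P : Measure Ω} [IsFiniteMeasure P] {X Y : Ω → ℝ} (hX : Measurable X) (hY : Measurable Y)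
    (hX2 : MemLp X 2 P) (hY1 : Integrable Y P) (hXY : IndepFun X Y P) (hX_mean : ∫ ω, X ω ∂P = 0)
    (h : P[X | MeasurableSpace.comap (fun ω => X ω + Y ω) inferInstance] =ᵐ[P] 0) :
    ∫ ω, X ω ^ 2 ∂P = 0 := by
  have hX1 : Integrable X P := hX2.integrable one_le_two
  have hXX : Integrable (fun ω => X ω * X ω) P := by simpa only [pow_two] using hX2.integrable_sq
  have hYX : Integrable (fun ω => Y ω * X ω) P := hXY.symm.integrable_mul hY1 hX1
  have hSX : Integrable (fun ω => (X ω + Y ω) * X ω) P := by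
    simp_rw [add_mul]
    exact hXX.add hYX
  have h_sum : ∫ ω, (X ω + Y ω) * X ω ∂P = 0 :=
    integral_mul_eq_zero_of_condExp_ae_eq_zero (hX.add hY).comap_le
      (comap_measurable _).stronglyMeasurable hSX hX1 h
  have h_cross : ∫ ω, Y ω * X ω ∂P = 0 := by
    rw [hXY.symm.integral_fun_mul_eq_mul_integral hY1.1 hX1.1, hX_mean, mul_zero]
  calc ∫ ω, X ω ^ 2 ∂P = ∫ ω, (X ω + Y ω) * X ω ∂P - ∫ ω, Y ω * X ω ∂P := by
        rw [← integral_sub hSX hYX]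
        congr 1 with ω
        ring
    _ = 0 := by rw [h_sum, h_cross, sub_zero]

theorem stmt10_general {Ω : Type*} [MeasurableSpace Ω] (P : Measure Ω) [IsProbabilityMeasure P]
    (X Y Z : Ω → ℝ) (hXm : Measurable X) (hYm : Measurable Y) (hZm : Measurable Z)
    (hX2 : MemLp X 2 P) (hXmean : ∫ ω, X ω ∂P = 0)
    (hY1 : Integrable Y P)
    (hXY : IndepFun X Y P)
    (hZXY : IndepFun Z (fun ω => (X ω, Y ω)) P)
    (m : ℝ) (v : NNReal) (hv : v ≠ 0) (hZgauss : Measure.map Z P = gaussianReal m v)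
    (heq : P[X | MeasurableSpace.comap (fun ω => X ω + Y ω + Z ω) inferInstance]
      =ᵐ[P] P[X | MeasurableSpace.comap (fun ω => X ω + Y ω) inferInstance]) :
    (P[X | MeasurableSpace.comap (fun ω => X ω + Y ω + Z ω) inferInstance]
      =ᵐ[P] fun _ => (0 : ℝ)) ∧ (∫ ω, X ω ^ 2 ∂P = 0) ∧ X =ᵐ[P] fun _ => (0 : ℝ) := by
  have hS : Measurable fun ω => X ω + Y ω := hXm.add hYm
  have hSZ : IndepFun (fun ω => X ω + Y ω) Z P := (hZXY.comp measurable_id measurable_add).symm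
  obtain ⟨c, hc⟩ := exists_condExp_ae_eq_const_of_condExp_add_ae_eq (ρ := volume) hS hZm hSZ
    (hZgauss ▸ gaussianReal_absolutelyContinuous' m hv) heq
  obtain rfl : c = 0 := hXmean ▸ eq_integral_of_condExp_ae_eq_const hS.comap_le hc
  have hX_sq : ∫ ω, X ω ^ 2 ∂P = 0 :=
    integral_sq_eq_zero_of_condExp_add_ae_eq_zero hXm hYm hX2 hY1 hXY hXmean hc
  refine ⟨heq.trans hc, hX_sq, ?_⟩
  filter_upwards [(integral_eq_zero_iff_of_nonneg (fun ω => sq_nonneg (X ω))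
    hX2.integrable_sq).mp hX_sq] with ω hω
  exact pow_eq_zero_iff two_ne_zero |>.mp hω

/-- If `X` independent of `Y`, `Z` non-degenerate Gaussian independent of `(X,Y)`, `X`
mean zero square-integrable, and `E[X|X+Y+Z] = E[X|X+Y]` a.s., then `E[X|X+Y+Z] = 0` a.s.
and `E[X^2] = 0`, i.e. `X = 0` a.s. -/
theorem stmt10 {Ω : Type*} [MeasurableSpace Ω] (P : Measure Ω) [IsProbabilityMeasure P]
    (X Y Z : Ω → ℝ) (hXm : Measurable X) (hYm : Measurable Y) (hZm : Measurable Z)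
    (hX2 : MemLp X 2 P) (hXmean : ∫ ω, X ω ∂P = 0)
    (hY1 : Integrable Y P) (hZ1 : Integrable Z P)
    (hXY : IndepFun X Y P)
    (hZXY : IndepFun Z (fun ω => (X ω, Y ω)) P)
    (m : ℝ) (v : NNReal) (hv : v ≠ 0) (hZgauss : Measure.map Z P = gaussianReal m v)
    (heq : P[X | MeasurableSpace.comap (fun ω => X ω + Y ω + Z ω) inferInstance]
      =ᵐ[P] P[X | MeasurableSpace.comap (fun ω => X ω + Y ω) inferInstance]) :
    (P[X | MeasurableSpace.comap (fun ω => X ω + Y ω + Z ω) inferInstance]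
      =ᵐ[P] fun _ => (0 : ℝ)) ∧ (∫ ω, X ω ^ 2 ∂P = 0) ∧ X =ᵐ[P] fun _ => (0 : ℝ) :=
  stmt10_general P X Y Z hXm hYm hZm hX2 hXmean hY1 hXY hZXY m v hv hZgauss heq
end

section
/- If (U_n, W_n) → (U, W) almost surely with sup_n E[U_n²] = M < ∞ and E[U²] ≤ M, then for every bounded continuous function h: ℝ → ℝ, lim_n E[h(U_n + W_n) · E[U_n | U_n + W_n]] = E[h(U+W) · E[U | U+W]]. -/
open MeasureTheory Filter Topology
open scoped NNReal ENNReal BoundedContinuousFunction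

/-!
Testing `E[U | S]` against a bounded `σ(S)`-measurable weight `h(S)` is the same as testing `U`
itself, so `E[h(U_n + W_n) E[U_n | U_n + W_n]] = E[h(U_n + W_n) U_n]`, and likewise in the limit. The products
`h(U_n + W_n) U_n` converge almost surely and are bounded in `L²`, hence uniformly integrable, so
Vitali's theorem lets their expectations pass to the limit.
-/

section

variable {Ω : Type*} {mΩ : MeasurableSpace Ω} {μ : Measure Ω}

theorem integral_mul_condExp_of_bound {m : MeasurableSpace Ω} (hm : m ≤ mΩ) [IsFiniteMeasure μ]
    {f g : Ω → ℝ} (hg : StronglyMeasurable[m] g) (hf : Integrable f μ) (c : ℝ)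
    (hg_bound : ∀ᵐ ω ∂μ, ‖g ω‖ ≤ c) :
    ∫ ω, g ω * μ[f | m] ω ∂μ = ∫ ω, g ω * f ω ∂μ := calc
  ∫ ω, g ω * μ[f | m] ω ∂μ = ∫ ω, μ[g * f | m] ω ∂μ :=
    integral_congr_ae (condExp_stronglyMeasurable_mul_of_bound hm hg hf c hg_bound).symm
  _ = ∫ ω, g ω * f ω ∂μ := integral_condExp hm

theorem integral_comp_mul_condExp_comap {β : Type*} [TopologicalSpace β] [MeasurableSpace β]
    [OpensMeasurableSpace β] [IsFiniteMeasure μ] {S : Ω → β} (hS : Measurable S) {f : Ω → ℝ}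
    (hf : Integrable f μ) (h : β →ᵇ ℝ) :
    ∫ ω, h (S ω) * μ[f | MeasurableSpace.comap S ‹_›] ω ∂μ = ∫ ω, h (S ω) * f ω ∂μ :=
  integral_mul_condExp_of_bound hS.comap_le
    (h.continuous.measurable.comp (comap_measurable S)).stronglyMeasurable hf ‖h‖
    (ae_of_all _ fun ω => h.norm_coe_le_norm (S ω))

theorem integral_mul_sq_le_of_bound {f g : Ω → ℝ} (hf : MemLp f 2 μ) {c : ℝ}
    (hg : ∀ ω, ‖g ω‖ ≤ c) :
    ∫ ω, (g ω * f ω) ^ 2 ∂μ ≤ c ^ 2 * ∫ ω, f ω ^ 2 ∂μ := by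
  rw [← integral_const_mul]
  refine integral_mono_of_nonneg (ae_of_all _ fun ω => sq_nonneg _)
    (hf.integrable_sq.const_mul _) (ae_of_all _ fun ω => ?_)
  have hg_sq : g ω ^ 2 ≤ c ^ 2 := by
    simpa only [Real.norm_eq_abs, sq_abs] using pow_le_pow_left₀ (norm_nonneg _) (hg ω) 2
  dsimp only
  rw [mul_pow]
  exact mul_le_mul_of_nonneg_right hg_sq (sq_nonneg _)

theorem unifIntegrable_one_of_integral_sq_le {ι : Type*} {f : ι → Ω → ℝ}
    (hf : ∀ i, MemLp (f i) 2 μ) {K : ℝ} (hK : ∀ i, ∫ ω, f i ω ^ 2 ∂μ ≤ K) :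
    UnifIntegrable f 1 μ := by
  refine unifIntegrable_of le_rfl ENNReal.one_ne_top (fun i => (hf i).1) fun ε hε => ?_
  obtain ⟨C, hC, hKC⟩ : ∃ C : ℝ≥0, (0 : ℝ) < C ∧ K / ε ≤ C :=
    ⟨(K / ε).toNNReal + 1, by positivity,
      (Real.le_coe_toNNReal _).trans (by simp only [NNReal.coe_add, NNReal.coe_one]; linarith)⟩
  refine ⟨C, fun i => ?_⟩
  have h_ind : ∀ ω, ‖{x | C ≤ ‖f i x‖₊}.indicator (f i) ω‖ ≤ f i ω ^ 2 / C := by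
    intro ω
    by_cases hω : C ≤ ‖f i ω‖₊
    · have hCf : (C : ℝ) ≤ ‖f i ω‖ := by simpa using NNReal.coe_le_coe.2 hω
      rw [Set.indicator_of_mem (show ω ∈ {x | C ≤ ‖f i x‖₊} from hω), le_div_iff₀ hC, ← sq_abs,
        ← Real.norm_eq_abs, sq]
      exact mul_le_mul_of_nonneg_left hCf (norm_nonneg _)
    · rw [Set.indicator_of_notMem (show ω ∉ {x | C ≤ ‖f i x‖₊} from hω), norm_zero]
      positivity
  calc eLpNorm ({x | C ≤ ‖f i x‖₊}.indicator (f i)) 1 μ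
      ≤ eLpNorm (fun ω => f i ω ^ 2 / C) 1 μ := eLpNorm_mono_real h_ind
    _ = ENNReal.ofReal (∫ ω, f i ω ^ 2 / C ∂μ) := by
      rw [eLpNorm_one_eq_lintegral_enorm, ← ofReal_integral_norm_eq_lintegral_enorm
        ((hf i).integrable_sq.div_const _)]
      simp only [Real.norm_eq_abs, abs_div, abs_sq, NNReal.abs_eq]
    _ ≤ ENNReal.ofReal ε := by
      refine ENNReal.ofReal_le_ofReal ?_
      rw [integral_div, div_le_iff₀ hC]
      exact (hK i).trans ((div_le_iff₀ hε).1 hKC |>.trans_eq (mul_comm _ _))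

theorem tendsto_integral_of_tendsto_ae_of_integral_sq_le [IsFiniteMeasure μ]
    {f : ℕ → Ω → ℝ} {g : Ω → ℝ} (hf : ∀ n, MemLp (f n) 2 μ) {K : ℝ}
    (hK : ∀ n, ∫ ω, f n ω ^ 2 ∂μ ≤ K) (hg : Integrable g μ)
    (hfg : ∀ᵐ ω ∂μ, Tendsto (fun n => f n ω) atTop (𝓝 (g ω))) :
    Tendsto (fun n => ∫ ω, f n ω ∂μ) atTop (𝓝 (∫ ω, g ω ∂μ)) :=
  tendsto_integral_of_L1' g hg.1 (Eventually.of_forall fun n => (hf n).integrable one_le_two)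
    (tendsto_Lp_finite_of_tendsto_ae le_rfl ENNReal.one_ne_top (fun n => (hf n).1)
      (memLp_one_iff_integrable.2 hg) (unifIntegrable_one_of_integral_sq_le hf hK) hfg)

end

theorem stmt11_general {Ω : Type*} [MeasurableSpace Ω] (P : Measure Ω) [IsProbabilityMeasure P]
    (U W : ℕ → Ω → ℝ) (U₀ W₀ : Ω → ℝ)
    (hUm : ∀ n, Measurable (U n)) (hWm : ∀ n, Measurable (W n))
    (hU₀m : Measurable U₀) (hW₀m : Measurable W₀)
    (has : ∀ᵐ ω ∂P, Tendsto (fun n => (U n ω, W n ω)) atTop (nhds (U₀ ω, W₀ ω)))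
    (hU2 : ∀ n, MemLp (U n) 2 P) (hU₀2 : MemLp U₀ 2 P)
    (M : ℝ) (hM : ∀ n, ∫ ω, (U n ω) ^ 2 ∂P ≤ M)
    (h : BoundedContinuousFunction ℝ ℝ) :
    Tendsto (fun n => ∫ ω, h (U n ω + W n ω) *
        (P[U n | MeasurableSpace.comap (fun ω => U n ω + W n ω) inferInstance]) ω ∂P)
      atTop
      (nhds (∫ ω, h (U₀ ω + W₀ ω) *
        (P[U₀ | MeasurableSpace.comap (fun ω => U₀ ω + W₀ ω) inferInstance]) ω ∂P)) := by
  have hh_bound : ∀ x, ‖h x‖ ≤ ‖h‖ := h.norm_coe_le_norm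
  have hh_memLp : ∀ {S : Ω → ℝ}, Measurable S → MemLp (fun ω => h (S ω)) ∞ P := fun hS =>
    memLp_top_of_bound (h.continuous.comp_aestronglyMeasurable hS.aestronglyMeasurable) ‖h‖
      (ae_of_all _ fun ω => hh_bound _)
  have hS : ∀ n, Measurable fun ω => U n ω + W n ω := fun n => (hUm n).add (hWm n)
  have hS₀ : Measurable fun ω => U₀ ω + W₀ ω := hU₀m.add hW₀m
  rw [integral_comp_mul_condExp_comap hS₀ (hU₀2.integrable one_le_two) h]
  refine Tendsto.congr (fun n => (integral_comp_mul_condExp_comap (hS n)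
    ((hU2 n).integrable one_le_two) h).symm) ?_
  refine tendsto_integral_of_tendsto_ae_of_integral_sq_le (K := ‖h‖ ^ 2 * M)
    (fun n => (hU2 n).mul' (hh_memLp (hS n)))
    (fun n => (integral_mul_sq_le_of_bound (hU2 n) fun ω => hh_bound _).trans
      (mul_le_mul_of_nonneg_left (hM n) (sq_nonneg _)))
    ((hU₀2.mul' (hh_memLp hS₀)).integrable one_le_two) ?_
  filter_upwards [has] with ω hω
  exact ((h.continuous.comp continuous_add).mul continuous_fst).continuousAt.tendsto.comp hω

/-- If `(U_n, W_n) -> (U, W)` a.s. with uniformly bounded second moments of the `U`'s,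
then for every bounded continuous `h`,
`E[h(U_n + W_n) * E[U_n | U_n + W_n]] -> E[h(U+W) * E[U | U+W]]`. -/
theorem stmt11 {Ω : Type*} [MeasurableSpace Ω] (P : Measure Ω) [IsProbabilityMeasure P]
    (U W : ℕ → Ω → ℝ) (U₀ W₀ : Ω → ℝ)
    (hUm : ∀ n, Measurable (U n)) (hWm : ∀ n, Measurable (W n))
    (hU₀m : Measurable U₀) (hW₀m : Measurable W₀)
    (has : ∀ᵐ ω ∂P, Tendsto (fun n => (U n ω, W n ω)) atTop (nhds (U₀ ω, W₀ ω)))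
    (hU2 : ∀ n, MemLp (U n) 2 P) (hU₀2 : MemLp U₀ 2 P)
    (M : ℝ) (hM : ∀ n, ∫ ω, (U n ω) ^ 2 ∂P ≤ M) (hM₀ : ∫ ω, (U₀ ω) ^ 2 ∂P ≤ M)
    (h : BoundedContinuousFunction ℝ ℝ) :
    Tendsto (fun n => ∫ ω, h (U n ω + W n ω) *
        (P[U n | MeasurableSpace.comap (fun ω => U n ω + W n ω) inferInstance]) ω ∂P)
      atTop
      (nhds (∫ ω, h (U₀ ω + W₀ ω) *
        (P[U₀ | MeasurableSpace.comap (fun ω => U₀ ω + W₀ ω) inferInstance]) ω ∂P)) :=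
  stmt11_general P U W U₀ W₀ hUm hWm hU₀m hW₀m has hU2 hU₀2 M hM h
end

section
/- Let T_n, T be random variables with sup_n E[T_n²] ≤ M and E[T²] ≤ M, and suppose S is a random variable such that E[h(S) T_n] → E[h(S) T] for all bounded continuous h. Then the same convergence E[h(S) T_n] → E[h(S) T] holds for all bounded Borel measurable h: ℝ → ℝ. -/
/-!
Write `ν` for the law of `S`. By Cauchy–Schwarz, the functionals `φ ↦ E[φ(S) Tₙ]` on `L²(ν)` are
Lipschitz with the common constant `√M`, so the set of `φ` along which they converge to
`E[φ(S) T]` is closed. It contains the bounded continuous functions, which are dense in `L²(ν)`,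
hence it is all of `L²(ν)`, and in particular contains every bounded Borel function.
-/

open MeasureTheory Filter

open scoped Topology InnerProductSpace BoundedContinuousFunction

theorem isClosed_setOf_tendsto_inner {𝕜 E ι : Type*} [RCLike 𝕜] [NormedAddCommGroup E]
    [InnerProductSpace 𝕜 E] {l : Filter ι} {x : ι → E} {C : ℝ} (hx : ∀ i, ‖x i‖ ≤ C) (x₀ : E) :
    IsClosed {y : E | Tendsto (fun i => ⟪y, x i⟫_𝕜) l (𝓝 ⟪y, x₀⟫_𝕜)} := by
  have hLip : ∀ i, LipschitzWith C.toNNReal (fun y : E => ⟪y, x i⟫_𝕜) := fun i =>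
    LipschitzWith.of_dist_le_mul fun y z => by
      rw [dist_eq_norm, dist_eq_norm, ← inner_sub_left, Real.coe_toNNReal', mul_comm]
      exact (norm_inner_le_norm _ _).trans
        (mul_le_mul_of_nonneg_left ((hx i).trans (le_max_left _ _)) (norm_nonneg _))
  exact Equicontinuous.isClosed_setOfPred_tendsto
    (LipschitzWith.uniformEquicontinuous _ _ hLip).equicontinuous
    (continuous_id.inner continuous_const)

namespace MeasureTheory

variable {Ω : Type*} [MeasurableSpace Ω] {μ : Measure Ω}

theorem L2.inner_toLp_toLp {f g : Ω → ℝ} (hf : MemLp f 2 μ) (hg : MemLp g 2 μ) :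
    ⟪hf.toLp f, hg.toLp g⟫_ℝ = ∫ ω, f ω * g ω ∂μ := by
  rw [L2.inner_def]
  refine integral_congr_ae ?_
  filter_upwards [hf.coeFn_toLp, hg.coeFn_toLp] with ω hfω hgω
  simp [hfω, hgω, mul_comm]

theorem L2.norm_toLp_le_sqrt {f : Ω → ℝ} (hf : MemLp f 2 μ) {M : ℝ}
    (hM : ∫ ω, f ω ^ 2 ∂μ ≤ M) : ‖hf.toLp f‖ ≤ √M := by
  refine Real.le_sqrt_of_sq_le ?_
  rw [← real_inner_self_eq_norm_sq, inner_toLp_toLp]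
  simpa [sq] using hM

theorem L2.inner_compMeasurePreserving_toLp {X : Type*} [MeasurableSpace X] {ν : Measure X}
    {S : Ω → X} (hS : MeasurePreserving S μ ν) {f : X → ℝ} (hf : MemLp f 2 ν) {g : Ω → ℝ}
    (hg : MemLp g 2 μ) :
    ⟪Lp.compMeasurePreserving S hS (hf.toLp f), hg.toLp g⟫_ℝ = ∫ ω, f (S ω) * g ω ∂μ := by
  rw [Lp.toLp_compMeasurePreserving, inner_toLp_toLp]
  rfl

theorem tendsto_integral_comp_mul_of_forall_boundedContinuousFunction
    {X ι : Type*} [TopologicalSpace X] [NormalSpace X] [MeasurableSpace X] [BorelSpace X]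
    [IsFiniteMeasure μ] {S : Ω → X} (hS : Measurable S) [(μ.map S).WeaklyRegular]
    {l : Filter ι} {T : ι → Ω → ℝ} {T₀ : Ω → ℝ} (hT : ∀ i, MemLp (T i) 2 μ)
    (hT₀ : MemLp T₀ 2 μ) {M : ℝ} (hM : ∀ i, ∫ ω, T i ω ^ 2 ∂μ ≤ M)
    (hbc : ∀ g : X →ᵇ ℝ,
      Tendsto (fun i => ∫ ω, g (S ω) * T i ω ∂μ) l (𝓝 (∫ ω, g (S ω) * T₀ ω ∂μ)))
    {f : X → ℝ} (hf : MemLp f 2 (μ.map S)) :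
    Tendsto (fun i => ∫ ω, f (S ω) * T i ω ∂μ) l (𝓝 (∫ ω, f (S ω) * T₀ ω ∂μ)) := by
  have hSμ := hS.measurePreserving μ
  set A := {φ : Lp ℝ 2 (μ.map S) |
      Tendsto (fun i => ⟪Lp.compMeasurePreserving S hSμ φ, (hT i).toLp⟫_ℝ) l
        (𝓝 ⟪Lp.compMeasurePreserving S hSμ φ, hT₀.toLp⟫_ℝ)}
  have hA : IsClosed A :=
    (isClosed_setOf_tendsto_inner (fun i => L2.norm_toLp_le_sqrt (hT i) (hM i)) _).preimage
      (Lp.isometry_compMeasurePreserving hSμ).continuous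
  have hdense := BoundedContinuousFunction.toLp_denseRange ℝ (μ.map S) ℝ (p := 2) (by simp)
  have hfA : hf.toLp f ∈ A := hdense.induction_on (p := (· ∈ A)) _ hA fun g => by
    have hg : MemLp g 2 (μ.map S) := g.memLp_top.mono_exponent le_top
    have : BoundedContinuousFunction.toLp 2 (μ.map S) ℝ g = hg.toLp g :=
      Lp.ext ((g.coeFn_toLp 2 _ ℝ).trans hg.coeFn_toLp.symm)
    simpa only [A, Set.mem_ofPred_eq, this, L2.inner_compMeasurePreserving_toLp] using hbc g
  simpa only [A, Set.mem_ofPred_eq, L2.inner_compMeasurePreserving_toLp] using hfA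

end MeasureTheory

theorem stmt12_general {Ω : Type*} [MeasurableSpace Ω] (P : Measure Ω) [IsProbabilityMeasure P]
    (T : ℕ → Ω → ℝ) (T₀ : Ω → ℝ) (S : Ω → ℝ) (hS : Measurable S)
    (hT2 : ∀ n, MemLp (T n) 2 P) (hT₀2 : MemLp T₀ 2 P)
    (M : ℝ) (hM : ∀ n, ∫ ω, (T n ω) ^ 2 ∂P ≤ M)
    (hbc : ∀ h : BoundedContinuousFunction ℝ ℝ,
      Tendsto (fun n => ∫ ω, h (S ω) * T n ω ∂P) atTop (nhds (∫ ω, h (S ω) * T₀ ω ∂P))) :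
    ∀ h : ℝ → ℝ, Measurable h → (∃ C : ℝ, ∀ x, |h x| ≤ C) →
      Tendsto (fun n => ∫ ω, h (S ω) * T n ω ∂P) atTop
        (nhds (∫ ω, h (S ω) * T₀ ω ∂P)) := by
  rintro h hh ⟨C, hC⟩
  refine tendsto_integral_comp_mul_of_forall_boundedContinuousFunction hS hT2 hT₀2 hM hbc ?_
  exact MemLp.of_bound hh.aestronglyMeasurable C
    (ae_of_all _ fun x => (Real.norm_eq_abs _).trans_le (hC x))

/-- If `sup_n E[T_n^2] <= M`, `E[T^2] <= M`, and `E[h(S) T_n] -> E[h(S) T]` for every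
bounded continuous `h`, then the same convergence holds for every bounded Borel `h`. -/
theorem stmt12 {Ω : Type*} [MeasurableSpace Ω] (P : Measure Ω) [IsProbabilityMeasure P]
    (T : ℕ → Ω → ℝ) (T₀ : Ω → ℝ) (S : Ω → ℝ) (hS : Measurable S)
    (hT2 : ∀ n, MemLp (T n) 2 P) (hT₀2 : MemLp T₀ 2 P)
    (M : ℝ) (hM : ∀ n, ∫ ω, (T n ω) ^ 2 ∂P ≤ M) (hM₀ : ∫ ω, (T₀ ω) ^ 2 ∂P ≤ M)
    (hbc : ∀ h : BoundedContinuousFunction ℝ ℝ,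
      Tendsto (fun n => ∫ ω, h (S ω) * T n ω ∂P) atTop (nhds (∫ ω, h (S ω) * T₀ ω ∂P))) :
    ∀ h : ℝ → ℝ, Measurable h → (∃ C : ℝ, ∀ x, |h x| ≤ C) →
      Tendsto (fun n => ∫ ω, h (S ω) * T n ω ∂P) atTop
        (nhds (∫ ω, h (S ω) * T₀ ω ∂P)) :=
  stmt12_general P T T₀ S hS hT2 hT₀2 M hM hbc
end

section
/- Let X, Y, Z be independent real random variables with Z absolutely continuous having an everywhere-positive density, and let f₁, f₂ be Borel functions with P(f₁(X+Y+Z) = f₂(X+Y)) = 1. Then f₁ is constant Lebesgue-almost everywhere, and hence f₁(X+Y+Z) is almost surely constant. -/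
open MeasureTheory ProbabilityTheory Filter

/-!
Since `W := X + Y` and `Z` are independent, Fubini turns `f₁ (W + Z) = f₂ W` a.s. into: for
almost every value `w` of `W`, `f₁ (w + z) = f₂ w` for almost every value `z` of `Z`. Fix one such
`w₀`. The law of `Z` has the same null sets as Lebesgue measure, so `f₁ (w₀ + ·)`, and by
translation invariance `f₁` itself, equals `f₂ w₀` Lebesgue-a.e. Running Fubini backwards, with the
same comparison of null sets, gives `f₁ (W + Z) = f₂ w₀` a.s.
-/

theorem ProbabilityTheory.IndepFun.ae_iff_ae_ae {Ω α β : Type*} [MeasurableSpace Ω]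
    [MeasurableSpace α] [MeasurableSpace β] {P : Measure Ω} [IsFiniteMeasure P]
    {W : Ω → α} {Z : Ω → β} (hWZ : IndepFun W Z P) (hW : AEMeasurable W P)
    (hZ : AEMeasurable Z P) {p : α × β → Prop} (hp : MeasurableSet {x | p x}) :
    (∀ᵐ ω ∂P, p (W ω, Z ω)) ↔ ∀ᵐ w ∂P.map W, ∀ᵐ z ∂P.map Z, p (w, z) := by
  rw [← Measure.ae_prod_iff_ae_ae hp, ← (indepFun_iff_map_prod_eq_prod_map_map hW hZ).mp hWZ,
    ae_map_iff (hW.prodMk hZ) hp]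

theorem ProbabilityTheory.IndepFun.exists_ae_eq_const_of_ae_add_eq {Ω G γ : Type*}
    [MeasurableSpace Ω] [MeasurableSpace G] [AddGroup G] [MeasurableAdd₂ G]
    [MeasurableSpace γ] [MeasurableEq γ] {P : Measure Ω} [IsProbabilityMeasure P]
    {μ : Measure G} [μ.IsAddLeftInvariant] {W Z : Ω → G} (hWZ : IndepFun W Z P)
    (hW : Measurable W) (hZ : Measurable Z) (hμZ : μ ≪ P.map Z) (hZμ : P.map Z ≪ μ)
    {f g : G → γ} (hf : Measurable f) (hg : Measurable g)
    (h : ∀ᵐ ω ∂P, f (W ω + Z ω) = g (W ω)) :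
    ∃ c, (∀ᵐ x ∂μ, f x = c) ∧ ∀ᵐ ω ∂P, f (W ω + Z ω) = c := by
  have : IsProbabilityMeasure (P.map W) := Measure.isProbabilityMeasure_map hW.aemeasurable
  have hsum : Measurable fun x : G × G => x.1 + x.2 := measurable_fst.add measurable_snd
  obtain ⟨w₀, hw₀⟩ : ∃ w, ∀ᵐ z ∂P.map Z, f (w + z) = g w :=
    ((hWZ.ae_iff_ae_ae hW.aemeasurable hZ.aemeasurable
      (measurableSet_eq_fun (hf.comp hsum) (hg.comp measurable_fst))).mp h).exists
  have hconst : ∀ᵐ x ∂μ, f x = g w₀ := (eventually_add_left_iff μ w₀).mp (hμZ.ae_le hw₀)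
  refine ⟨g w₀, hconst, (hWZ.ae_iff_ae_ae hW.aemeasurable hZ.aemeasurable
    (measurableSet_eq_fun (hf.comp hsum) measurable_const)).mpr (.of_forall fun w => ?_)⟩
  exact hZμ.ae_le ((eventually_add_left_iff μ w).mpr hconst)

theorem stmt15_general {Ω : Type*} [MeasurableSpace Ω] (P : Measure Ω) [IsProbabilityMeasure P]
    (X Y Z : Ω → ℝ) (hXm : Measurable X) (hYm : Measurable Y) (hZm : Measurable Z)
    (hZXY : IndepFun Z (fun ω => (X ω, Y ω)) P)
    (d : ℝ → ENNReal) (hd : Measurable d) (hdpos : ∀ x, 0 < d x)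
    (hZd : Measure.map Z P = MeasureTheory.volume.withDensity d)
    (f₁ f₂ : ℝ → ℝ) (hf₁ : Measurable f₁) (hf₂ : Measurable f₂)
    (heq : ∀ᵐ ω ∂P, f₁ (X ω + Y ω + Z ω) = f₂ (X ω + Y ω)) :
    ∃ c : ℝ, (∀ᵐ x ∂(MeasureTheory.volume : Measure ℝ), f₁ x = c) ∧
      (∀ᵐ ω ∂P, f₁ (X ω + Y ω + Z ω) = c) := by
  have hXYZ : IndepFun (fun ω => X ω + Y ω) Z P :=
    (hZXY.comp measurable_id (measurable_fst.add measurable_snd)).symm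
  have hvolZ : volume ≪ P.map Z := hZd ▸
    withDensity_absolutelyContinuous' hd.aemeasurable (.of_forall fun x => (hdpos x).ne')
  have hZvol : P.map Z ≪ volume := hZd ▸ withDensity_absolutelyContinuous _ _
  exact hXYZ.exists_ae_eq_const_of_ae_add_eq (hXm.add hYm) hZm hvolZ hZvol hf₁ hf₂ heq

/-- If `X, Y, Z` are independent, `Z` has an everywhere-positive density with respect to
Lebesgue measure, and `f₁(X+Y+Z) = f₂(X+Y)` a.s., then `f₁` is constant Lebesgue-a.e. and
`f₁(X+Y+Z)` is a.s. constant. -/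
theorem stmt15 {Ω : Type*} [MeasurableSpace Ω] (P : Measure Ω) [IsProbabilityMeasure P]
    (X Y Z : Ω → ℝ) (hXm : Measurable X) (hYm : Measurable Y) (hZm : Measurable Z)
    (hXY : IndepFun X Y P)
    (hZXY : IndepFun Z (fun ω => (X ω, Y ω)) P)
    (d : ℝ → ENNReal) (hd : Measurable d) (hdpos : ∀ x, 0 < d x)
    (hZd : Measure.map Z P = MeasureTheory.volume.withDensity d)
    (f₁ f₂ : ℝ → ℝ) (hf₁ : Measurable f₁) (hf₂ : Measurable f₂)
    (heq : ∀ᵐ ω ∂P, f₁ (X ω + Y ω + Z ω) = f₂ (X ω + Y ω)) :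
    ∃ c : ℝ, (∀ᵐ x ∂(MeasureTheory.volume : Measure ℝ), f₁ x = c) ∧
      (∀ᵐ ω ∂P, f₁ (X ω + Y ω + Z ω) = c) :=
  stmt15_general P X Y Z hXm hYm hZm hZXY d hd hdpos hZd f₁ f₂ hf₁ hf₂ heq
end
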